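/- Consider the Suslov system on ℝ⁵ with parameters I₁, I₂ > 0, I₁₃, I₂₃ ∈ ℝ with a₃/I₂₃ > 0, and linear potential U(γ) = a₁γ₁ + a₂γ₂ + a₃γ₃. Then the point x₀ = (ω₁, ω₂, γ₁, γ₂, γ₃) = (0, −√(a₃/I₂₃), 0, 1, 0) is an equilibrium of the defining vector field v (v(x₀) = 0), and the divergence of v at x₀ (equal to the trace of the linearization matrix there) is div v(x₀) = (I₁₃/I₁)·√(a₃/I₂₃). -/

import Mathlib

/-!
At `x₀ = (0, -s, 0, 1, 0)` with `s = √(a₃/I₂₃)` all components of the field vanish trivially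
except the first, which is `(a₃ - I₂₃ s²)/I₁ = 0`. Of the Jacobian diagonal only `∂v₁/∂ω₁ = -I₁₃ω₂/I₁`
and `∂v₂/∂ω₂ = I₂₃ω₁/I₂` are nonzero, so `div v = I₂₃ω₁/I₂ - I₁₃ω₂/I₁`, which at `x₀` is `I₁₃ s/I₁`.
-/

/-- The Suslov system on ℝ⁵, coordinates `x = (ω₁, ω₂, γ₁, γ₂, γ₃)`, with parameters
`I₁, I₂ > 0`, `I₁₃, I₂₃ ∈ ℝ` and the linear potential `U = a₁γ₁ + a₂γ₂ + a₃γ₃`: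
`I₁ω̇₁ = −ω₂(I₁₃ω₁+I₂₃ω₂) + γ₂a₃ − γ₃a₂`, `I₂ω̇₂ = ω₁(I₁₃ω₁+I₂₃ω₂) + γ₃a₁ − γ₁a₃`,
`γ̇₁ = −γ₃ω₂`, `γ̇₂ = γ₃ω₁`, `γ̇₃ = γ₁ω₂ − γ₂ω₁`. -/
noncomputable def suslovLin (I₁ I₂ I₁₃ I₂₃ a₁ a₂ a₃ : ℝ) (x : Fin 5 → ℝ) : Fin 5 → ℝ :=
  ![(-(x 1) * (I₁₃ * x 0 + I₂₃ * x 1) + x 3 * a₃ - x 4 * a₂) / I₁,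
    ((x 0) * (I₁₃ * x 0 + I₂₃ * x 1) + x 4 * a₁ - x 2 * a₃) / I₂,
    -(x 4) * x 1,
    (x 4) * x 0,
    x 2 * x 1 - x 3 * x 0]

noncomputable def divergence (𝕜 : Type*) [NontriviallyNormedField 𝕜] {ι : Type*} [Fintype ι]
    [DecidableEq ι] (v : (ι → 𝕜) → ι → 𝕜) (x : ι → 𝕜) : 𝕜 :=
  ∑ i, fderiv 𝕜 (fun y => v y i) x (Pi.single i 1)

theorem fderiv_apply_coord {𝕜 : Type*} [NontriviallyNormedField 𝕜] {ι : Type*} [Fintype ι]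
    (j : ι) (x v : ι → 𝕜) : fderiv 𝕜 (fun y : ι → 𝕜 => y j) x v = v j := by
  rw [(hasFDerivAt_apply j x).fderiv]
  rfl

theorem divergence_suslovLin (I₁ I₂ I₁₃ I₂₃ a₁ a₂ a₃ : ℝ) (x : Fin 5 → ℝ) :
    divergence ℝ (suslovLin I₁ I₂ I₁₃ I₂₃ a₁ a₂ a₃) x = I₂₃ * x 0 / I₂ - I₁₃ * x 1 / I₁ := by
  simp (disch := fun_prop) only [divergence, Fin.sum_univ_five, suslovLin, Matrix.cons_val,
    div_eq_mul_inv, fderiv_fun_mul, fderiv_fun_sub, fderiv_fun_add, fderiv_fun_neg]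
  simp [fderiv_apply_coord]
  ring

theorem suslovLin_eq_zero_of_mul_sq_eq {I₁ I₂ I₁₃ I₂₃ a₁ a₂ a₃ s : ℝ} (h : I₂₃ * s ^ 2 = a₃) :
    suslovLin I₁ I₂ I₁₃ I₂₃ a₁ a₂ a₃ ![0, -s, 0, 1, 0] = 0 := by
  ext i
  fin_cases i <;> simp [suslovLin]
  left
  linear_combination -h

theorem suslov_equilibrium_nonzero_divergence_general
    (I₁ I₂ I₁₃ I₂₃ a₁ a₂ a₃ : ℝ) (ha : 0 < a₃ / I₂₃) :
    suslovLin I₁ I₂ I₁₃ I₂₃ a₁ a₂ a₃ ![0, -Real.sqrt (a₃ / I₂₃), 0, 1, 0] = 0 ∧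
    ∑ i, fderiv ℝ (fun y => suslovLin I₁ I₂ I₁₃ I₂₃ a₁ a₂ a₃ y i)
        ![0, -Real.sqrt (a₃ / I₂₃), 0, 1, 0] (Pi.single i 1)
      = (I₁₃ / I₁) * Real.sqrt (a₃ / I₂₃) := by
  have hI₂₃ : I₂₃ ≠ 0 := by
    rintro rfl
    simp at ha
  refine ⟨suslovLin_eq_zero_of_mul_sq_eq ?_, ?_⟩
  · rw [Real.sq_sqrt ha.le]
    field_simp
  · rw [← divergence, divergence_suslovLin]
    simp only [Matrix.cons_val_zero, Matrix.cons_val_one]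
    ring

/-- For the Suslov system with linear potential and `a₃/I₂₃ > 0`, the point
`x₀ = (0, −√(a₃/I₂₃), 0, 1, 0)` is an equilibrium, and the divergence of the field at `x₀`
(the trace of the linearization matrix there) equals `(I₁₃/I₁)·√(a₃/I₂₃)`. -/
theorem suslov_equilibrium_nonzero_divergence
    (I₁ I₂ I₁₃ I₂₃ a₁ a₂ a₃ : ℝ) (hI₁ : 0 < I₁) (hI₂ : 0 < I₂) (ha : 0 < a₃ / I₂₃) :
    suslovLin I₁ I₂ I₁₃ I₂₃ a₁ a₂ a₃ ![0, -Real.sqrt (a₃ / I₂₃), 0, 1, 0] = 0 ∧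
    ∑ i, fderiv ℝ (fun y => suslovLin I₁ I₂ I₁₃ I₂₃ a₁ a₂ a₃ y i)
        ![0, -Real.sqrt (a₃ / I₂₃), 0, 1, 0] (Pi.single i 1)
      = (I₁₃ / I₁) * Real.sqrt (a₃ / I₂₃) :=
  suslov_equilibrium_nonzero_divergence_general I₁ I₂ I₁₃ I₂₃ a₁ a₂ a₃ ha
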